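/- Let m > 0. For α > 0 let g_α : ℝ³ → ℝ be the Gaussian adiabatic cut-off g_α(p) = α^{3/2} · exp(−α‖p‖²). Then the second-order vacuum energy coefficient diverges in the adiabatic limit: ∫_{ℝ⁹} V_{g_α}(p₁,p₂,p₃) dp₁ dp₂ dp₃ → ∞ as α → ∞. -/

import Mathlib

open MeasureTheory

/-- Euclidean three-space. -/
abbrev R3 := EuclideanSpace ℝ (Fin 3)

/-- The one-particle energy `ω(p) = √(‖p‖² + m²)` for `p ∈ ℝ³`. -/
noncomputable def ω3 (m : ℝ) (p : R3) : ℝ := Real.sqrt (‖p‖ ^ 2 + m ^ 2)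

/-- The second-order vacuum integrand `V_g(p₁,p₂,p₃)` of the regularised `φ³`
theory on the noncommutative Minkowski space, with adiabatic cut-off `g`. -/
noncomputable def V (m : ℝ) (g : R3 → ℂ) (p : R3 × R3 × R3) : ℝ :=
  ‖g ((3 : ℝ)⁻¹ • (p.1 + p.2.1 + p.2.2))‖ ^ 2 *
    (Real.exp (-‖p.1 - (3 : ℝ)⁻¹ • (p.1 + p.2.1 + p.2.2)‖ ^ 2 -
        (ω3 m p.1 - (ω3 m p.1 + ω3 m p.2.1 + ω3 m p.2.2) / 3) ^ 2) *
      Real.exp (-‖p.2.1 - (3 : ℝ)⁻¹ • (p.1 + p.2.1 + p.2.2)‖ ^ 2 -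
        (ω3 m p.2.1 - (ω3 m p.1 + ω3 m p.2.1 + ω3 m p.2.2) / 3) ^ 2) *
      Real.exp (-‖p.2.2 - (3 : ℝ)⁻¹ • (p.1 + p.2.1 + p.2.2)‖ ^ 2 -
        (ω3 m p.2.2 - (ω3 m p.1 + ω3 m p.2.1 + ω3 m p.2.2) / 3) ^ 2)) /
    ((ω3 m p.1 + ω3 m p.2.1 + ω3 m p.2.2) * (ω3 m p.1 * ω3 m p.2.1 * ω3 m p.2.2))

/-- The Gaussian adiabatic cut-off `g_α(p) = α^{3/2} exp(−α‖p‖²)`, regarded as a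
complex-valued function. -/
noncomputable def gauss (α : ℝ) (p : R3) : ℂ :=
  ((α ^ ((3 : ℝ) / 2) * Real.exp (-α * ‖p‖ ^ 2) : ℝ) : ℂ)

/-!
The cut-off factors out of the integrand, `V m g p = ‖g p̄‖² · V m 1 p`. On the set where
`‖p₁ + p₂ + p₃‖ ≤ α^{-1/2}` and `‖p₂‖, ‖p₃‖ ≤ 1` one has `‖g_α(p̄)‖² ≥ α³/e`, while `V m 1` is
bounded below there by a positive constant, by compactness. This set has volume of order
`α^{-3/2}`, so the integral is at least of order `α^{3/2}`. The integral is finite because the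
parallel-axis identity `∑ ‖p_j‖² = ∑ ‖p_j - p̄‖² + 3 ‖p̄‖²` lets the factor `exp(-2α‖p̄‖²)`, for
`2α ≥ 3`, complete the relative Gaussians in `V` to a Gaussian in all nine variables.
-/

open Metric Filter

theorem parallel_axis_three {E : Type*} [NormedAddCommGroup E] [InnerProductSpace ℝ E]
    (a b c : E) :
    ‖a‖ ^ 2 + ‖b‖ ^ 2 + ‖c‖ ^ 2 =
      ‖a - (3 : ℝ)⁻¹ • (a + b + c)‖ ^ 2 + ‖b - (3 : ℝ)⁻¹ • (a + b + c)‖ ^ 2 +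
        ‖c - (3 : ℝ)⁻¹ • (a + b + c)‖ ^ 2 + 3 * ‖(3 : ℝ)⁻¹ • (a + b + c)‖ ^ 2 := by
  set s := (3 : ℝ)⁻¹ • (a + b + c)
  have hsum : a + b + c = (3 : ℝ) • s := by simp [s, smul_smul]
  have hinner : inner ℝ a s + inner ℝ b s + inner ℝ c s = 3 * ‖s‖ ^ 2 := by
    rw [← inner_add_left, ← inner_add_left, hsum, real_inner_smul_left,
      real_inner_self_eq_norm_sq]
  linarith [norm_sub_sq_real a s, norm_sub_sq_real b s, norm_sub_sq_real c s]

theorem measureReal_closedBall_pos {X : Type*} [PseudoMetricSpace X] [ProperSpace X]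
    [MeasurableSpace X] (μ : Measure X) [μ.IsOpenPosMeasure] [IsFiniteMeasureOnCompacts μ]
    (x : X) {r : ℝ} (hr : 0 < r) : 0 < μ.real (closedBall x r) :=
  ENNReal.toReal_pos (measure_closedBall_pos μ x hr).ne' measure_closedBall_lt_top.ne

theorem integrable_exp_neg_norm_sq_three :
    Integrable fun p : R3 × R3 × R3 =>
      Real.exp (-‖p.1‖ ^ 2) * (Real.exp (-‖p.2.1‖ ^ 2) * Real.exp (-‖p.2.2‖ ^ 2)) := by
  have h : Integrable fun v : R3 => Real.exp (-‖v‖ ^ 2) := by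
    convert (GaussianFourier.integrable_cexp_neg_mul_sq_norm_add (V := R3)
      (b := 1) one_pos 0 0).norm using 2 with v
    simp [Complex.norm_exp, ← Complex.ofReal_pow]
  exact h.mul_prod (h.mul_prod h)

lemma le_ω3 {m : ℝ} (hm : 0 ≤ m) (p : R3) : m ≤ ω3 m p :=
  (Real.le_sqrt hm (by positivity)).2 (le_add_of_nonneg_left (by positivity))

lemma ω3_pos {m : ℝ} (hm : 0 < m) (p : R3) : 0 < ω3 m p :=
  hm.trans_le (le_ω3 hm.le p)

lemma continuous_ω3 (m : ℝ) : Continuous (ω3 m) := by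
  unfold ω3
  fun_prop

noncomputable def centroid (p : R3 × R3 × R3) : R3 := (3 : ℝ)⁻¹ • (p.1 + p.2.1 + p.2.2)

lemma V_nonneg (m : ℝ) (g : R3 → ℂ) (p : R3 × R3 × R3) : 0 ≤ V m g p := by
  unfold V ω3
  positivity

lemma V_one_pos {m : ℝ} (hm : 0 < m) (p : R3 × R3 × R3) : 0 < V m 1 p := by
  have := ω3_pos hm p.1
  have := ω3_pos hm p.2.1
  have := ω3_pos hm p.2.2
  simp only [V, Pi.one_apply, norm_one]
  positivity

lemma continuous_V {m : ℝ} (hm : 0 < m) {g : R3 → ℂ} (hg : Continuous g) :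
    Continuous (V m g) := by
  have := continuous_ω3 m
  refine Continuous.div (by fun_prop) (by fun_prop) fun p => ?_
  have := ω3_pos hm p.1
  have := ω3_pos hm p.2.1
  have := ω3_pos hm p.2.2
  positivity

lemma V_eq_norm_sq_mul_V_one (m : ℝ) (g : R3 → ℂ) (p : R3 × R3 × R3) :
    V m g p = ‖g (centroid p)‖ ^ 2 * V m 1 p := by
  simp only [V, centroid, Pi.one_apply, norm_one, one_pow, one_mul, mul_div_assoc]

lemma V_one_le {m : ℝ} (hm : 0 < m) (p : R3 × R3 × R3) :
    V m 1 p ≤ Real.exp (-(‖p.1 - centroid p‖ ^ 2 + ‖p.2.1 - centroid p‖ ^ 2 +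
      ‖p.2.2 - centroid p‖ ^ 2)) / (3 * m ^ 4) := by
  have h1 := le_ω3 hm.le p.1
  have h2 := le_ω3 hm.le p.2.1
  have h3 := le_ω3 hm.le p.2.2
  have hprod : m * m * m ≤ ω3 m p.1 * ω3 m p.2.1 * ω3 m p.2.2 :=
    mul_le_mul (mul_le_mul h1 h2 hm.le (ω3_pos hm _).le) h3 hm.le
      (mul_pos (ω3_pos hm _) (ω3_pos hm _)).le
  have hden : 3 * m * (m * m * m) ≤
      (ω3 m p.1 + ω3 m p.2.1 + ω3 m p.2.2) * (ω3 m p.1 * ω3 m p.2.1 * ω3 m p.2.2) :=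
    mul_le_mul (by linarith) hprod (mul_pos (mul_pos hm hm) hm).le (by linarith)
  simp only [V, Pi.one_apply, norm_one, one_pow, one_mul, ← Real.exp_add, ← centroid.eq_1]
  refine div_le_div₀ (by positivity) (Real.exp_le_exp.2 ?_) (by positivity) (by linarith)
  linarith [sq_nonneg (ω3 m p.1 - (ω3 m p.1 + ω3 m p.2.1 + ω3 m p.2.2) / 3),
    sq_nonneg (ω3 m p.2.1 - (ω3 m p.1 + ω3 m p.2.1 + ω3 m p.2.2) / 3),
    sq_nonneg (ω3 m p.2.2 - (ω3 m p.1 + ω3 m p.2.1 + ω3 m p.2.2) / 3)]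

lemma norm_gauss_sq {α : ℝ} (hα : 0 ≤ α) (p : R3) :
    ‖gauss α p‖ ^ 2 = α ^ 3 * Real.exp (-(2 * α) * ‖p‖ ^ 2) := by
  rw [gauss, Complex.norm_real, Real.norm_eq_abs, sq_abs, mul_pow, ← Real.exp_nat_mul,
    ← Real.rpow_natCast (α ^ ((3 : ℝ) / 2)) 2, ← Real.rpow_mul hα,
    show (3 : ℝ) / 2 * (2 : ℕ) = (3 : ℕ) by norm_num, Real.rpow_natCast]
  ring_nf

lemma V_gauss_le {m α : ℝ} (hm : 0 < m) (hα : 3 / 2 ≤ α) (p : R3 × R3 × R3) :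
    V m (gauss α) p ≤ α ^ 3 / (3 * m ^ 4) *
      (Real.exp (-‖p.1‖ ^ 2) * (Real.exp (-‖p.2.1‖ ^ 2) * Real.exp (-‖p.2.2‖ ^ 2))) := by
  have hpa := parallel_axis_three p.1 p.2.1 p.2.2
  rw [← centroid.eq_1] at hpa
  calc V m (gauss α) p
      ≤ α ^ 3 * Real.exp (-(2 * α) * ‖centroid p‖ ^ 2) *
          (Real.exp (-(‖p.1 - centroid p‖ ^ 2 + ‖p.2.1 - centroid p‖ ^ 2 +
            ‖p.2.2 - centroid p‖ ^ 2)) / (3 * m ^ 4)) := by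
        rw [V_eq_norm_sq_mul_V_one, norm_gauss_sq (by linarith)]
        gcongr
        exact V_one_le hm p
    _ ≤ α ^ 3 / (3 * m ^ 4) * Real.exp (-(‖p.1‖ ^ 2 + ‖p.2.1‖ ^ 2 + ‖p.2.2‖ ^ 2)) := by
        rw [mul_assoc, mul_div_assoc', ← Real.exp_add, mul_div_assoc', mul_div_right_comm]
        gcongr
        nlinarith [sq_nonneg ‖centroid p‖]
    _ = _ := by
        simp only [← Real.exp_add]
        ring_nf

lemma integrable_V_gauss {m α : ℝ} (hm : 0 < m) (hα : 3 / 2 ≤ α) :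
    Integrable (V m (gauss α)) := by
  refine (integrable_exp_neg_norm_sq_three.const_mul (α ^ 3 / (3 * m ^ 4))).mono'
    (continuous_V hm (by unfold gauss; fun_prop)).aestronglyMeasurable
    (Eventually.of_forall fun p => ?_)
  rw [Real.norm_of_nonneg (V_nonneg m _ p)]
  exact V_gauss_le hm hα p

def smallTotalMomentum (r : ℝ) : Set (R3 × R3 × R3) :=
  {p | ‖p.2.1‖ ≤ 1 ∧ ‖p.2.2‖ ≤ 1 ∧ ‖p.1 + p.2.1 + p.2.2‖ ≤ r}

lemma measurableSet_smallTotalMomentum (r : ℝ) : MeasurableSet (smallTotalMomentum r) := by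
  simp only [smallTotalMomentum, Set.ofPred_and]
  exact ((isClosed_le (by fun_prop) (by fun_prop)).inter
    ((isClosed_le (by fun_prop) (by fun_prop)).inter
      (isClosed_le (by fun_prop) (by fun_prop)))).measurableSet

lemma smallTotalMomentum_subset_closedBall {r : ℝ} (hr : r ≤ 1) :
    smallTotalMomentum r ⊆ closedBall 0 3 := by
  rintro p ⟨h2, h3, hsum⟩
  have h1 : ‖p.1‖ ≤ 3 := by
    calc ‖p.1‖ = ‖(p.1 + p.2.1 + p.2.2) + -p.2.1 + -p.2.2‖ := by abel_nf
      _ ≤ ‖p.1 + p.2.1 + p.2.2‖ + ‖-p.2.1‖ + ‖-p.2.2‖ := norm_add₃_le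
      _ ≤ 3 := by rw [norm_neg, norm_neg]; linarith
  simp only [mem_closedBall_zero_iff, Prod.norm_def, sup_le_iff]
  exact ⟨h1, by linarith, by linarith⟩

lemma volume_smallTotalMomentum (r : ℝ) :
    volume (smallTotalMomentum r) =
      volume (closedBall (0 : R3) r) * volume (closedBall (0 : R3 × R3) 1) := by
  have hslice : ∀ y : R3 × R3, volume ((fun x => (x, y)) ⁻¹' smallTotalMomentum r) =
      (closedBall 0 1).indicator (fun _ => volume (closedBall (0 : R3) r)) y := by
    intro y
    by_cases hy : y ∈ closedBall (0 : R3 × R3) 1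
    · have hy' : ‖y.1‖ ≤ 1 ∧ ‖y.2‖ ≤ 1 := by
        simpa only [mem_closedBall_zero_iff, Prod.norm_def, sup_le_iff] using hy
      have hpre : (fun x => (x, y)) ⁻¹' smallTotalMomentum r = closedBall (-(y.1 + y.2)) r := by
        ext x
        simp only [smallTotalMomentum, Set.preimage_ofPred_eq, Set.mem_ofPred_eq, hy'.1, hy'.2,
          true_and, mem_closedBall, dist_eq_norm, sub_neg_eq_add, add_assoc]
      rw [Set.indicator_of_mem hy, hpre, Measure.addHaar_closedBall_center]
    · have hpre : (fun x => (x, y)) ⁻¹' smallTotalMomentum r = ∅ := by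
        ext x
        simp only [smallTotalMomentum, Set.mem_preimage, Set.mem_empty_iff_false, iff_false]
        rintro ⟨h1, h2, -⟩
        exact hy (by simpa only [mem_closedBall_zero_iff, Prod.norm_def, sup_le_iff] using
          ⟨h1, h2⟩)
      rw [Set.indicator_of_notMem hy, hpre, measure_empty]
  rw [Measure.volume_eq_prod, Measure.prod_apply_symm (measurableSet_smallTotalMomentum r),
    lintegral_congr hslice, lintegral_indicator_const measurableSet_closedBall]

lemma measureReal_smallTotalMomentum {r : ℝ} (hr : 0 ≤ r) :
    volume.real (smallTotalMomentum r) =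
      r ^ 3 * (volume.real (closedBall (0 : R3) 1) * volume.real (closedBall (0 : R3 × R3) 1)) := by
  rw [measureReal_def, volume_smallTotalMomentum, ENNReal.toReal_mul, ← measureReal_def,
    ← measureReal_def, Measure.addHaar_real_closedBall' _ _ hr, finrank_euclideanSpace_fin]
  ring

lemma exists_pos_mul_pow_le_V_gauss {m : ℝ} (hm : 0 < m) :
    ∃ K > 0, ∀ α ≥ 1, ∀ p ∈ smallTotalMomentum (Real.sqrt α)⁻¹,
      K * α ^ 3 ≤ V m (gauss α) p := by
  obtain ⟨K, hK, hKV⟩ := (isCompact_closedBall (0 : R3 × R3 × R3) 3).exists_forall_le'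
    (continuous_V hm continuous_const).continuousOn fun p _ => V_one_pos hm p
  refine ⟨Real.exp (-1) * K, mul_pos (Real.exp_pos _) hK, fun α hα p hp => ?_⟩
  have hsqrt : 1 ≤ Real.sqrt α := Real.one_le_sqrt.2 hα
  have hcentroid : α * ‖centroid p‖ ^ 2 ≤ 1 / 9 := by
    have h3 : 3 * ‖centroid p‖ ≤ (Real.sqrt α)⁻¹ := by
      rw [centroid, norm_smul, Real.norm_of_nonneg (by norm_num)]
      linarith [hp.2.2]
    have h9 : (3 * ‖centroid p‖) ^ 2 ≤ α⁻¹ := by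
      simpa [inv_pow, Real.sq_sqrt (by linarith : 0 ≤ α)] using
        pow_le_pow_left₀ (by positivity) h3 2
    calc α * ‖centroid p‖ ^ 2 = α * (3 * ‖centroid p‖) ^ 2 / 9 := by ring
      _ ≤ α * α⁻¹ / 9 := by gcongr
      _ = 1 / 9 := by rw [mul_inv_cancel₀ (by linarith)]
  have hV1 : K ≤ V m 1 p :=
    hKV p (smallTotalMomentum_subset_closedBall (inv_le_one_of_one_le₀ hsqrt) hp)
  rw [V_eq_norm_sq_mul_V_one, norm_gauss_sq (by linarith)]
  calc Real.exp (-1) * K * α ^ 3 = α ^ 3 * Real.exp (-1) * K := by ring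
    _ ≤ α ^ 3 * Real.exp (-(2 * α) * ‖centroid p‖ ^ 2) * V m 1 p := by
        gcongr
        linarith

theorem stmt17 (m : ℝ) (hm : 0 < m) :
    Filter.Tendsto (fun α : ℝ => ∫ p : R3 × R3 × R3, V m (gauss α) p)
      Filter.atTop Filter.atTop := by
  obtain ⟨K, hK, hV⟩ := exists_pos_mul_pow_le_V_gauss hm
  set c := volume.real (closedBall (0 : R3) 1) * volume.real (closedBall (0 : R3 × R3) 1)
  have hc : 0 < c := mul_pos (measureReal_closedBall_pos _ _ one_pos)
    (measureReal_closedBall_pos _ _ one_pos)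
  refine tendsto_atTop_mono' _ ?_ (((tendsto_pow_atTop three_ne_zero).comp
    Real.tendsto_sqrt_atTop).const_mul_atTop (mul_pos hK hc))
  filter_upwards [eventually_ge_atTop 2] with α hα
  have hint := integrable_V_gauss hm (α := α) (by linarith)
  have hfin : volume (smallTotalMomentum (Real.sqrt α)⁻¹) ≠ ⊤ := by
    rw [volume_smallTotalMomentum]
    exact ENNReal.mul_ne_top measure_closedBall_lt_top.ne measure_closedBall_lt_top.ne
  calc K * c * Real.sqrt α ^ 3
      = K * α ^ 3 * volume.real (smallTotalMomentum (Real.sqrt α)⁻¹) := by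
        have hα3 : α ^ 3 = Real.sqrt α ^ 6 := by
          rw [show 6 = 2 * 3 by rfl, pow_mul, Real.sq_sqrt (by linarith)]
        rw [measureReal_smallTotalMomentum (by positivity), hα3]
        field_simp
        ring
    _ ≤ ∫ p in smallTotalMomentum (Real.sqrt α)⁻¹, V m (gauss α) p :=
        setIntegral_ge_of_const_le_real (measurableSet_smallTotalMomentum _) hfin
          (hV α (by linarith)) hint.integrableOn
    _ ≤ ∫ p, V m (gauss α) p :=
        setIntegral_le_integral hint (Eventually.of_forall (V_nonneg m _))
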